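/- For a k-uniform hypertree T with vertex u and an edge e_0 = {v_1,…,v_{k−1},u} pendant at u (u has degree 1), let T̃_t be the connected component of T∖e_0 containing v_t for t∈[k−1]. If p satisfies the eigenvalue system of T with x_u = 1 at λ, all coordinates nonzero, then Π_{t=1}^{k−1} p_{v_t} = Π_{t=1}^{k−1} φ_{T̃_t − v_t}(λ)/φ_{T̃_t}(λ). -/

import Mathlib

/-- A set of edges is a matching if its edges are pairwise disjoint. -/
def IsHyperMatching {γ : Type*} (M : Finset (Finset γ)) : Prop :=
  ∀ e ∈ M, ∀ f ∈ M, e ≠ f → Disjoint e f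

open Classical in
/-- `mCount E t` is the number of `t`-matchings of the hypergraph with edge set `E`. -/
noncomputable def mCount {γ : Type*} (E : Finset (Finset γ)) (t : ℕ) : ℕ :=
  (E.powerset.filter (fun M => M.card = t ∧ IsHyperMatching M)).card

/-- The matching polynomial `φ_H(λ) = ∑_t (-1)^t m_t(H) λ^(n - t k)` evaluated at `z : ℂ`. -/
noncomputable def mPolyC {γ : Type*} (n k : ℕ) (E : Finset (Finset γ)) (z : ℂ) : ℂ :=
  ∑ t ∈ Finset.range (E.card + 1), (-1 : ℂ) ^ t * (mCount E t : ℂ) * z ^ (n - t * k)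

/-- A `k`-uniform hypertree on vertex set `V` with edge set `E`. -/
inductive IsHypertree {α : Type*} [DecidableEq α] (k : ℕ) : Finset α → Finset (Finset α) → Prop
  | single (v : α) : IsHypertree k {v} ∅
  | attach {V : Finset α} {E : Finset (Finset α)} (e : Finset α) :
      IsHypertree k V E → e.card = k → (e ∩ V).card = 1 →
      IsHypertree k (V ∪ e) (insert e E)

open Classical in
noncomputable def matchSet {γ : Type*} (E : Finset (Finset γ)) : Finset (Finset (Finset γ)) :=
  E.powerset.filter (fun M => IsHyperMatching M)

open Classical in
lemma mem_matchSet {γ : Type*} {E M : Finset (Finset γ)} :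
    M ∈ matchSet E ↔ M ⊆ E ∧ IsHyperMatching M := by
  simp [matchSet, Finset.mem_filter, Finset.mem_powerset]

open Classical in
lemma mPolyC_eq_sum {γ : Type*} (n k : ℕ) (E : Finset (Finset γ)) (z : ℂ) :
    mPolyC n k E z = ∑ M ∈ matchSet E, (-1 : ℂ) ^ M.card * z ^ (n - M.card * k) := by
  rw [← Finset.sum_fiberwise_of_maps_to (g := Finset.card) (t := Finset.range (E.card + 1))
    (fun M hM => by
      rw [mem_matchSet] at hM
      exact Finset.mem_range.mpr (Nat.lt_succ_of_le (Finset.card_le_card hM.1)))]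
  unfold mPolyC
  refine Finset.sum_congr rfl (fun t _ => ?_)
  have h1 : ∀ M ∈ (matchSet E).filter (fun M => M.card = t),
      ((-1:ℂ))^M.card * z^(n - M.card*k) = (-1:ℂ)^t * z^(n-t*k) := fun M hM => by
    rw [(Finset.mem_filter.mp hM).2]
  have h2 : (matchSet E).filter (fun M => M.card = t)
      = E.powerset.filter (fun M => M.card = t ∧ IsHyperMatching M) := by
    unfold matchSet
    rw [Finset.filter_filter]
    exact Finset.filter_congr (fun M _ => by tauto)
  rw [Finset.sum_congr rfl h1, Finset.sum_const, h2, mCount, nsmul_eq_mul]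
  ring

def EdgeSupp {γ : Type*} (k : ℕ) (E : Finset (Finset γ)) (U : Finset γ) : Prop :=
  ∀ f ∈ E, f ⊆ U ∧ f.card = k

lemma matching_card_bound {γ : Type*} [DecidableEq γ] {k : ℕ} {E : Finset (Finset γ)}
    {U : Finset γ} (hS : EdgeSupp k E U) {M : Finset (Finset γ)} (hM : M ∈ matchSet E) :
    M.card * k ≤ U.card := by
  rw [mem_matchSet] at hM
  have hdisj : ∀ e ∈ M, ∀ f ∈ M, e ≠ f → Disjoint (id e) (id f) := hM.2
  have h1 : (M.biUnion id).card = ∑ e ∈ M, e.card := Finset.card_biUnion hdisj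
  have h2 : ∑ e ∈ M, e.card = M.card * k := by
    rw [Finset.sum_congr rfl (fun e he => (hS e (hM.1 he)).2), Finset.sum_const, smul_eq_mul]
  have h3 : M.biUnion id ⊆ U := by
    intro x hx
    rcases Finset.mem_biUnion.mp hx with ⟨e, he, hxe⟩
    exact (hS e (hM.1 he)).1 hxe
  calc M.card * k = (M.biUnion id).card := by rw [h1, h2]
    _ ≤ U.card := Finset.card_le_card h3

lemma isHyperMatching_of_subset {γ : Type*} {M N : Finset (Finset γ)} (h : N ⊆ M)
    (hM : IsHyperMatching M) : IsHyperMatching N :=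
  fun e he f hf hef => hM e (h he) f (h hf) hef

open Classical in
lemma mPolyC_union {γ : Type*} [DecidableEq γ] {k : ℕ} (hk : k ≠ 0)
    {E₁ E₂ : Finset (Finset γ)} {U₁ U₂ : Finset γ}
    (hS₁ : EdgeSupp k E₁ U₁) (hS₂ : EdgeSupp k E₂ U₂) (hU : Disjoint U₁ U₂) (z : ℂ) :
    mPolyC (U₁.card + U₂.card) k (E₁ ∪ E₂) z
      = mPolyC U₁.card k E₁ z * mPolyC U₂.card k E₂ z := by
  have hcross : ∀ e₁ ∈ E₁, ∀ e₂ ∈ E₂, Disjoint e₁ e₂ := fun e₁ h₁ e₂ h₂ =>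
    hU.mono (hS₁ e₁ h₁).1 (hS₂ e₂ h₂).1
  have hEE : Disjoint E₁ E₂ := by
    rw [Finset.disjoint_left]
    intro f h1 h2
    have := hcross f h1 f h2
    rw [disjoint_self] at this
    have hc := (hS₁ f h1).2
    rw [this] at hc
    simp at hc
    exact hk hc.symm
  rw [mPolyC_eq_sum, mPolyC_eq_sum, mPolyC_eq_sum, Finset.sum_mul_sum, ← Finset.sum_product']
  refine Finset.sum_nbij' (fun M => (M ∩ E₁, M ∩ E₂)) (fun P => P.1 ∪ P.2) ?_ ?_ ?_ ?_ ?_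
  · intro M hM
    rw [mem_matchSet] at hM
    rw [Finset.mem_product, mem_matchSet, mem_matchSet]
    exact ⟨⟨Finset.inter_subset_right, isHyperMatching_of_subset Finset.inter_subset_left hM.2⟩,
      ⟨Finset.inter_subset_right, isHyperMatching_of_subset Finset.inter_subset_left hM.2⟩⟩
  · intro P hP
    rw [Finset.mem_product, mem_matchSet, mem_matchSet] at hP
    rw [mem_matchSet]
    constructor
    · exact Finset.union_subset (hP.1.1.trans Finset.subset_union_left)
        (hP.2.1.trans Finset.subset_union_right)
    · intro e he f hf hef
      rcases Finset.mem_union.mp he with he' | he' <;>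
        rcases Finset.mem_union.mp hf with hf' | hf'
      · exact hP.1.2 e he' f hf' hef
      · exact hcross e (hP.1.1 he') f (hP.2.1 hf')
      · exact (hcross f (hP.1.1 hf') e (hP.2.1 he')).symm
      · exact hP.2.2 e he' f hf' hef
  · intro M hM
    rw [mem_matchSet] at hM
    simp only
    rw [← Finset.inter_union_distrib_left, Finset.inter_eq_left.mpr hM.1]
  · intro P hP
    rw [Finset.mem_product, mem_matchSet, mem_matchSet] at hP
    have h1 : (P.1 ∪ P.2) ∩ E₁ = P.1 := by
      rw [Finset.union_inter_distrib_right, Finset.inter_eq_left.mpr hP.1.1,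
        Finset.disjoint_iff_inter_eq_empty.mp (hEE.symm.mono_left hP.2.1), Finset.union_empty]
    have h2 : (P.1 ∪ P.2) ∩ E₂ = P.2 := by
      rw [Finset.union_inter_distrib_right, Finset.inter_eq_left.mpr hP.2.1,
        Finset.disjoint_iff_inter_eq_empty.mp (hEE.mono_left hP.1.1), Finset.empty_union]
    rw [h1, h2]
  · intro M hM
    rw [mem_matchSet] at hM
    have hsplit : M = (M ∩ E₁) ∪ (M ∩ E₂) := by
      rw [← Finset.inter_union_distrib_left, Finset.inter_eq_left.mpr hM.1]
    have hd : Disjoint (M ∩ E₁) (M ∩ E₂) :=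
      hEE.mono Finset.inter_subset_right Finset.inter_subset_right
    have hcard : M.card = (M ∩ E₁).card + (M ∩ E₂).card := by
      conv_lhs => rw [hsplit]
      exact Finset.card_union_of_disjoint hd
    have hb₁ : (M ∩ E₁).card * k ≤ U₁.card := matching_card_bound hS₁
      (mem_matchSet.mpr ⟨Finset.inter_subset_right,
        isHyperMatching_of_subset Finset.inter_subset_left hM.2⟩)
    have hb₂ : (M ∩ E₂).card * k ≤ U₂.card := matching_card_bound hS₂
      (mem_matchSet.mpr ⟨Finset.inter_subset_right,
        isHyperMatching_of_subset Finset.inter_subset_left hM.2⟩)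
    simp only
    rw [hcard, pow_add, ← pow_add]
    have : U₁.card + U₂.card - ((M ∩ E₁).card + (M ∩ E₂).card) * k
        = (U₁.card - (M ∩ E₁).card * k) + (U₂.card - (M ∩ E₂).card * k) := by rw [add_mul]; omega
    rw [this]
    ring

open Classical in
lemma matchSet_empty {γ : Type*} : matchSet (∅ : Finset (Finset γ)) = {∅} := by
  ext M
  rw [mem_matchSet, Finset.mem_singleton]
  constructor
  · rintro ⟨h, -⟩
    exact Finset.subset_empty.mp h
  · rintro rfl
    exact ⟨Finset.empty_subset _, fun e he => absurd he (Finset.notMem_empty e)⟩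

lemma mPolyC_empty {γ : Type*} (n k : ℕ) (z : ℂ) :
    mPolyC n k (∅ : Finset (Finset γ)) z = z ^ n := by
  rw [mPolyC_eq_sum, matchSet_empty]
  simp

open Classical in
lemma mPolyC_biUnion {γ : Type*} [DecidableEq γ] {k : ℕ} (hk : k ≠ 0)
    (s : Finset γ) (F : γ → Finset (Finset γ)) (U : γ → Finset γ)
    (hS : ∀ w ∈ s, EdgeSupp k (F w) (U w))
    (hU : ∀ w ∈ s, ∀ w' ∈ s, w ≠ w' → Disjoint (U w) (U w')) (z : ℂ) :
    mPolyC (∑ w ∈ s, (U w).card) k (s.biUnion F) z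
      = ∏ w ∈ s, mPolyC (U w).card k (F w) z := by
  induction s using Finset.induction_on with
  | empty => simp [mPolyC_empty]
  | @insert a s ha ih =>
    have hS' : ∀ w ∈ s, EdgeSupp k (F w) (U w) := fun w hw => hS w (Finset.mem_insert_of_mem hw)
    have hU' : ∀ w ∈ s, ∀ w' ∈ s, w ≠ w' → Disjoint (U w) (U w') :=
      fun w hw w' hw' => hU w (Finset.mem_insert_of_mem hw) w' (Finset.mem_insert_of_mem hw')
    have hSb : EdgeSupp k (s.biUnion F) (s.biUnion U) := by
      intro f hf
      rcases Finset.mem_biUnion.mp hf with ⟨w, hw, hfw⟩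
      exact ⟨(hS' w hw f hfw).1.trans (Finset.subset_biUnion_of_mem U hw), (hS' w hw f hfw).2⟩
    have hUb : Disjoint (U a) (s.biUnion U) := by
      rw [Finset.disjoint_biUnion_right]
      exact fun w hw => hU a (Finset.mem_insert_self a s) w (Finset.mem_insert_of_mem hw)
        (fun h => ha (h ▸ hw))
    have hcard : (s.biUnion U).card = ∑ w ∈ s, (U w).card := Finset.card_biUnion hU'
    rw [Finset.sum_insert ha, Finset.prod_insert ha, Finset.biUnion_insert, ← hcard,
      mPolyC_union hk (hS a (Finset.mem_insert_self a s)) hSb hUb, hcard,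
      ih hS' hU']

open Classical in
lemma mPolyC_insert {γ : Type*} [DecidableEq γ] {k n n' n'' : ℕ} (hk : k ≠ 0)
    {e : Finset γ} {E' : Finset (Finset γ)} (he : e ∉ E') (hecard : e.card = k)
    (hb' : ∀ M ∈ matchSet E', M.card * k ≤ n')
    (hb'' : ∀ M ∈ matchSet (E'.filter (fun g => Disjoint e g)), M.card * k ≤ n'')
    (hn' : n' ≤ n) (hn'' : n'' + k ≤ n) (z : ℂ) :
    mPolyC n k (insert e E') z
      = z ^ (n - n') * mPolyC n' k E' z
        - z ^ (n - k - n'') * mPolyC n'' k (E'.filter (fun g => Disjoint e g)) z := by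
  have hene : e ≠ ∅ := by
    intro h
    rw [h] at hecard
    simp at hecard
    exact hk hecard.symm
  rw [mPolyC_eq_sum, ← Finset.sum_filter_add_sum_filter_not (matchSet (insert e E'))
    (fun M => e ∈ M)]
  have hS1 : (matchSet (insert e E')).filter (fun M => e ∉ M) = matchSet E' := by
    ext M
    rw [Finset.mem_filter, mem_matchSet, mem_matchSet]
    constructor
    · rintro ⟨⟨hsub, hm⟩, hnot⟩
      refine ⟨fun x hx => ?_, hm⟩
      rcases Finset.mem_insert.mp (hsub hx) with h | h
      · exact absurd (h ▸ hx) hnot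
      · exact h
    · rintro ⟨hsub, hm⟩
      exact ⟨⟨hsub.trans (Finset.subset_insert e E'), hm⟩, fun hmem => he (hsub hmem)⟩
  have hS1sum : ∑ M ∈ (matchSet (insert e E')).filter (fun M => ¬ e ∈ M),
      (-1 : ℂ) ^ M.card * z ^ (n - M.card * k)
      = z ^ (n - n') * mPolyC n' k E' z := by
    rw [hS1, mPolyC_eq_sum, Finset.mul_sum]
    refine Finset.sum_congr rfl (fun M hM => ?_)
    have hb := hb' M hM
    have : n - M.card * k = (n - n') + (n' - M.card * k) := by omega
    rw [this, pow_add]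
    ring
  have hS2sum : ∑ M ∈ (matchSet (insert e E')).filter (fun M => e ∈ M),
      (-1 : ℂ) ^ M.card * z ^ (n - M.card * k)
      = - (z ^ (n - k - n'') * mPolyC n'' k (E'.filter (fun g => Disjoint e g)) z) := by
    rw [mPolyC_eq_sum, Finset.mul_sum, ← Finset.sum_neg_distrib]
    refine Finset.sum_nbij' (fun M => M.erase e) (fun M' => insert e M') ?_ ?_ ?_ ?_ ?_
    · intro M hM
      rw [Finset.mem_filter, mem_matchSet] at hM
      rw [mem_matchSet]
      constructor
      · intro g hg
        rw [Finset.mem_erase] at hg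
        rw [Finset.mem_filter]
        rcases Finset.mem_insert.mp (hM.1.1 hg.2) with h | h
        · exact absurd h hg.1
        · exact ⟨h, hM.1.2 e hM.2 g hg.2 (Ne.symm hg.1)⟩
      · exact isHyperMatching_of_subset (Finset.erase_subset e M) hM.1.2
    · intro M' hM'
      rw [mem_matchSet] at hM'
      rw [Finset.mem_filter, mem_matchSet]
      refine ⟨⟨?_, ?_⟩, Finset.mem_insert_self e M'⟩
      · intro g hg
        rcases Finset.mem_insert.mp hg with h | h
        · exact h ▸ Finset.mem_insert_self e E'
        · exact Finset.mem_insert_of_mem (Finset.mem_filter.mp (hM'.1 h)).1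
      · intro f hf g hg hfg
        rcases Finset.mem_insert.mp hf with h | h <;> rcases Finset.mem_insert.mp hg with h' | h'
        · exact absurd (h.trans h'.symm) hfg
        · exact h ▸ (Finset.mem_filter.mp (hM'.1 h')).2
        · exact (h' ▸ (Finset.mem_filter.mp (hM'.1 h)).2).symm
        · exact hM'.2 f h g h' hfg
    · intro M hM
      rw [Finset.mem_filter] at hM
      exact Finset.insert_erase hM.2
    · intro M' hM'
      rw [mem_matchSet] at hM'
      have heM' : e ∉ M' := by
        intro h
        have := (Finset.mem_filter.mp (hM'.1 h)).2
        rw [disjoint_self] at this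
        exact hene this
      exact Finset.erase_insert heM'
    · intro M hM
      rw [Finset.mem_filter, mem_matchSet] at hM
      have heM : e ∈ M := hM.2
      have hcard : M.card = (M.erase e).card + 1 := by
        rw [Finset.card_erase_of_mem heM]
        have : 1 ≤ M.card := Finset.card_pos.mpr ⟨e, heM⟩
        omega
      have hbM : (M.erase e).card * k ≤ n'' := by
        refine hb'' (M.erase e) (mem_matchSet.mpr ⟨?_, isHyperMatching_of_subset
          (Finset.erase_subset e M) hM.1.2⟩)
        intro g hg
        rw [Finset.mem_erase] at hg
        rw [Finset.mem_filter]
        rcases Finset.mem_insert.mp (hM.1.1 hg.2) with h | h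
        · exact absurd h hg.1
        · exact ⟨h, hM.1.2 e heM g hg.2 (Ne.symm hg.1)⟩
      have hexp : n - M.card * k = (n - k - n'') + (n'' - (M.erase e).card * k) := by
        rw [hcard, add_mul, one_mul]
        omega
      rw [hexp, pow_add, hcard, pow_add]
      ring
  rw [hS2sum, hS1sum]
  ring

open Classical in
lemma matchSet_filter_not_uses {γ : Type*} [DecidableEq γ] (F : Finset (Finset γ)) (r : γ) :
    (matchSet F).filter (fun M => ∀ f ∈ M, r ∉ f)
      = matchSet (F.filter (fun f => r ∉ f)) := by
  ext M
  rw [Finset.mem_filter, mem_matchSet, mem_matchSet]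
  constructor
  · rintro ⟨⟨hsub, hm⟩, hav⟩
    exact ⟨fun f hf => Finset.mem_filter.mpr ⟨hsub hf, hav f hf⟩, hm⟩
  · rintro ⟨hsub, hm⟩
    exact ⟨⟨fun f hf => (Finset.mem_filter.mp (hsub hf)).1, hm⟩,
      fun f hf => (Finset.mem_filter.mp (hsub hf)).2⟩

open Classical in
lemma mPolyC_glue {γ : Type*} [DecidableEq γ] {k : ℕ} (hk : 2 ≤ k)
    {F₁ F₂ : Finset (Finset γ)} {W₁ W₂ : Finset γ} {r : γ}
    (hS₁ : EdgeSupp k F₁ W₁) (hS₂ : EdgeSupp k F₂ W₂) (hI : W₁ ∩ W₂ = {r}) (z : ℂ) :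
    mPolyC (W₁.card + W₂.card - 1) k (F₁ ∪ F₂) z
      = mPolyC W₁.card k F₁ z
          * mPolyC (W₂.erase r).card k (F₂.filter (fun f => r ∉ f)) z
        + mPolyC (W₁.erase r).card k (F₁.filter (fun f => r ∉ f)) z
          * mPolyC W₂.card k F₂ z
        - z * (mPolyC (W₁.erase r).card k (F₁.filter (fun f => r ∉ f)) z
          * mPolyC (W₂.erase r).card k (F₂.filter (fun f => r ∉ f)) z) := by
  have hr₁ : r ∈ W₁ := by
    have : r ∈ W₁ ∩ W₂ := hI ▸ Finset.mem_singleton_self r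
    exact (Finset.mem_inter.mp this).1
  have hr₂ : r ∈ W₂ := by
    have : r ∈ W₁ ∩ W₂ := hI ▸ Finset.mem_singleton_self r
    exact (Finset.mem_inter.mp this).2
  have hW₁ : 1 ≤ W₁.card := Finset.card_pos.mpr ⟨r, hr₁⟩
  have hW₂ : 1 ≤ W₂.card := Finset.card_pos.mpr ⟨r, hr₂⟩
  have hcross : ∀ f₁ ∈ F₁, ∀ f₂ ∈ F₂, (r ∈ f₁ ∧ r ∈ f₂) ∨ Disjoint f₁ f₂ := by
    intro f₁ h₁ f₂ h₂
    by_cases hd : Disjoint f₁ f₂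
    · exact Or.inr hd
    · left
      rw [Finset.not_disjoint_iff] at hd
      rcases hd with ⟨x, hx₁, hx₂⟩
      have : x ∈ W₁ ∩ W₂ := Finset.mem_inter.mpr ⟨(hS₁ f₁ h₁).1 hx₁, (hS₂ f₂ h₂).1 hx₂⟩
      rw [hI, Finset.mem_singleton] at this
      subst this
      exact ⟨hx₁, hx₂⟩
  have hFF : Disjoint F₁ F₂ := by
    rw [Finset.disjoint_left]
    intro f h1 h2
    have hsub : f ⊆ W₁ ∩ W₂ := Finset.subset_inter (hS₁ f h1).1 (hS₂ f h2).1
    rw [hI] at hsub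
    have := Finset.card_le_card hsub
    rw [Finset.card_singleton, (hS₁ f h1).2] at this
    omega
  -- bounds
  have hbnd₁ : ∀ M ∈ matchSet F₁, M.card * k ≤ W₁.card := fun M hM =>
    matching_card_bound hS₁ hM
  have hbnd₂ : ∀ M ∈ matchSet F₂, M.card * k ≤ W₂.card := fun M hM =>
    matching_card_bound hS₂ hM
  have hS₁0 : EdgeSupp k (F₁.filter (fun f => r ∉ f)) (W₁.erase r) := by
    intro f hf
    rw [Finset.mem_filter] at hf
    exact ⟨fun x hx => Finset.mem_erase.mpr ⟨fun h => hf.2 (h ▸ hx), (hS₁ f hf.1).1 hx⟩,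
      (hS₁ f hf.1).2⟩
  have hS₂0 : EdgeSupp k (F₂.filter (fun f => r ∉ f)) (W₂.erase r) := by
    intro f hf
    rw [Finset.mem_filter] at hf
    exact ⟨fun x hx => Finset.mem_erase.mpr ⟨fun h => hf.2 (h ▸ hx), (hS₂ f hf.1).1 hx⟩,
      (hS₂ f hf.1).2⟩
  have hbnd₁0 : ∀ M ∈ matchSet (F₁.filter (fun f => r ∉ f)), M.card * k ≤ W₁.card - 1 := by
    intro M hM
    have := matching_card_bound hS₁0 hM
    rwa [Finset.card_erase_of_mem hr₁] at this
  have hbnd₂0 : ∀ M ∈ matchSet (F₂.filter (fun f => r ∉ f)), M.card * k ≤ W₂.card - 1 := by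
    intro M hM
    have := matching_card_bound hS₂0 hM
    rwa [Finset.card_erase_of_mem hr₂] at this
  have hce₁ : (W₁.erase r).card = W₁.card - 1 := Finset.card_erase_of_mem hr₁
  have hce₂ : (W₂.erase r).card = W₂.card - 1 := Finset.card_erase_of_mem hr₂
  -- the bijection onto filtered product
  have hbij : ∑ M ∈ matchSet (F₁ ∪ F₂), (-1 : ℂ) ^ M.card
        * z ^ (W₁.card + W₂.card - 1 - M.card * k)
      = ∑ P ∈ ((matchSet F₁) ×ˢ (matchSet F₂)).filter
          (fun P => ¬ ((∃ f ∈ P.1, r ∈ f) ∧ (∃ f ∈ P.2, r ∈ f))),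
          (-1 : ℂ) ^ (P.1.card + P.2.card)
            * z ^ (W₁.card + W₂.card - 1 - (P.1.card + P.2.card) * k) := by
    refine Finset.sum_nbij' (fun M => (M ∩ F₁, M ∩ F₂)) (fun P => P.1 ∪ P.2) ?_ ?_ ?_ ?_ ?_
    · intro M hM
      rw [mem_matchSet] at hM
      rw [Finset.mem_filter, Finset.mem_product, mem_matchSet, mem_matchSet]
      refine ⟨⟨⟨Finset.inter_subset_right, isHyperMatching_of_subset Finset.inter_subset_left hM.2⟩,
        ⟨Finset.inter_subset_right, isHyperMatching_of_subset Finset.inter_subset_left hM.2⟩⟩, ?_⟩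
      rintro ⟨⟨f₁, hf₁, hrf₁⟩, ⟨f₂, hf₂, hrf₂⟩⟩
      rw [Finset.mem_inter] at hf₁ hf₂
      have hne : f₁ ≠ f₂ := fun h => Finset.disjoint_left.mp hFF (h ▸ hf₁.2) hf₂.2
      have := hM.2 f₁ hf₁.1 f₂ hf₂.1 hne
      exact Finset.disjoint_left.mp this hrf₁ hrf₂
    · intro P hP
      rw [Finset.mem_filter, Finset.mem_product, mem_matchSet, mem_matchSet] at hP
      rw [mem_matchSet]
      constructor
      · exact Finset.union_subset (hP.1.1.1.trans Finset.subset_union_left)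
          (hP.1.2.1.trans Finset.subset_union_right)
      · intro f hf g hg hfg
        rcases Finset.mem_union.mp hf with hf' | hf' <;>
          rcases Finset.mem_union.mp hg with hg' | hg'
        · exact hP.1.1.2 f hf' g hg' hfg
        · rcases hcross f (hP.1.1.1 hf') g (hP.1.2.1 hg') with h | h
          · exact absurd ⟨⟨f, hf', h.1⟩, ⟨g, hg', h.2⟩⟩ hP.2
          · exact h
        · rcases hcross g (hP.1.1.1 hg') f (hP.1.2.1 hf') with h | h
          · exact absurd ⟨⟨g, hg', h.1⟩, ⟨f, hf', h.2⟩⟩ hP.2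
          · exact h.symm
        · exact hP.1.2.2 f hf' g hg' hfg
    · intro M hM
      rw [mem_matchSet] at hM
      simp only
      rw [← Finset.inter_union_distrib_left, Finset.inter_eq_left.mpr hM.1]
    · intro P hP
      rw [Finset.mem_filter, Finset.mem_product, mem_matchSet, mem_matchSet] at hP
      have h1 : (P.1 ∪ P.2) ∩ F₁ = P.1 := by
        rw [Finset.union_inter_distrib_right, Finset.inter_eq_left.mpr hP.1.1.1,
          Finset.disjoint_iff_inter_eq_empty.mp (hFF.symm.mono_left hP.1.2.1),
          Finset.union_empty]
      have h2 : (P.1 ∪ P.2) ∩ F₂ = P.2 := by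
        rw [Finset.union_inter_distrib_right, Finset.inter_eq_left.mpr hP.1.2.1,
          Finset.disjoint_iff_inter_eq_empty.mp (hFF.mono_left hP.1.1.1),
          Finset.empty_union]
      rw [h1, h2]
    · intro M hM
      rw [mem_matchSet] at hM
      have hsplit : M = (M ∩ F₁) ∪ (M ∩ F₂) := by
        rw [← Finset.inter_union_distrib_left, Finset.inter_eq_left.mpr hM.1]
      have hd : Disjoint (M ∩ F₁) (M ∩ F₂) :=
        hFF.mono Finset.inter_subset_right Finset.inter_subset_right
      have hcard : M.card = (M ∩ F₁).card + (M ∩ F₂).card := by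
        conv_lhs => rw [hsplit]
        exact Finset.card_union_of_disjoint hd
      simp only
      rw [hcard]
  rw [mPolyC_eq_sum, hbij]
  -- split the filtered product
  have hsplitset : ((matchSet F₁) ×ˢ (matchSet F₂)).filter
        (fun P => ¬ ((∃ f ∈ P.1, r ∈ f) ∧ (∃ f ∈ P.2, r ∈ f)))
      = (((matchSet F₁).filter (fun M => ∀ f ∈ M, r ∉ f)) ×ˢ (matchSet F₂))
        ∪ (((matchSet F₁).filter (fun M => ∃ f ∈ M, r ∈ f))
            ×ˢ ((matchSet F₂).filter (fun M => ∀ f ∈ M, r ∉ f))) := by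
    ext P
    simp only [Finset.mem_filter, Finset.mem_union, Finset.mem_product]
    by_cases h1 : ∃ f ∈ P.1, r ∈ f <;> by_cases h2 : ∃ f ∈ P.2, r ∈ f
    · constructor
      · rintro ⟨-, h⟩
        exact absurd ⟨h1, h2⟩ h
      · rintro (⟨⟨-, hav⟩, -⟩ | ⟨-, ⟨-, hav⟩⟩)
        · rcases h1 with ⟨f, hf, hrf⟩
          exact absurd hrf (hav f hf)
        · rcases h2 with ⟨f, hf, hrf⟩
          exact absurd hrf (hav f hf)
    · constructor
      · rintro ⟨⟨hm1, hm2⟩, -⟩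
        refine Or.inr ⟨⟨hm1, h1⟩, ⟨hm2, ?_⟩⟩
        push_neg at h2
        exact h2
      · rintro (⟨⟨hm1, -⟩, hm2⟩ | ⟨⟨hm1, -⟩, ⟨hm2, -⟩⟩) <;> exact ⟨⟨hm1, hm2⟩, fun hcon => by first | exact h2 hcon.2 | exact h1 hcon.1⟩
    · constructor
      · rintro ⟨⟨hm1, hm2⟩, -⟩
        push_neg at h1
        exact Or.inl ⟨⟨hm1, h1⟩, hm2⟩
      · rintro (⟨⟨hm1, -⟩, hm2⟩ | ⟨⟨hm1, -⟩, ⟨hm2, -⟩⟩) <;> exact ⟨⟨hm1, hm2⟩, fun hcon => by first | exact h2 hcon.2 | exact h1 hcon.1⟩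
    · constructor
      · rintro ⟨⟨hm1, hm2⟩, -⟩
        push_neg at h1
        exact Or.inl ⟨⟨hm1, h1⟩, hm2⟩
      · rintro (⟨⟨hm1, -⟩, hm2⟩ | ⟨⟨hm1, -⟩, ⟨hm2, -⟩⟩) <;> exact ⟨⟨hm1, hm2⟩, fun hcon => by first | exact h2 hcon.2 | exact h1 hcon.1⟩
  rw [hsplitset]
  have hdisjset : Disjoint
      (((matchSet F₁).filter (fun M => ∀ f ∈ M, r ∉ f)) ×ˢ (matchSet F₂))
      (((matchSet F₁).filter (fun M => ∃ f ∈ M, r ∈ f))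
        ×ˢ ((matchSet F₂).filter (fun M => ∀ f ∈ M, r ∉ f))) := by
    rw [Finset.disjoint_left]
    rintro P hP hP'
    rw [Finset.mem_product, Finset.mem_filter] at hP hP'
    rcases hP'.1.2 with ⟨f, hf, hrf⟩
    exact hP.1.2 f hf hrf
  rw [Finset.sum_union hdisjset, Finset.sum_product, Finset.sum_product]
  -- first double sum
  have hfst : ∑ M₁ ∈ (matchSet F₁).filter (fun M => ∀ f ∈ M, r ∉ f), ∑ M₂ ∈ matchSet F₂,
        (-1 : ℂ) ^ (M₁.card + M₂.card)
          * z ^ (W₁.card + W₂.card - 1 - (M₁.card + M₂.card) * k)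
      = mPolyC (W₁.erase r).card k (F₁.filter (fun f => r ∉ f)) z
          * mPolyC W₂.card k F₂ z := by
    rw [matchSet_filter_not_uses, mPolyC_eq_sum, mPolyC_eq_sum, Finset.sum_mul_sum]
    refine Finset.sum_congr rfl (fun M₁ hM₁ => Finset.sum_congr rfl (fun M₂ hM₂ => ?_))
    have hb1 := hbnd₁0 M₁ hM₁
    have hb2 := hbnd₂ M₂ hM₂
    have : W₁.card + W₂.card - 1 - (M₁.card + M₂.card) * k
        = (W₁.card - 1 - M₁.card * k) + (W₂.card - M₂.card * k) := by
      rw [add_mul]; omega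
    rw [this, hce₁, pow_add, pow_add]
    have h2 : W₁.card - 1 - M₁.card * k = (W₁.erase r).card - M₁.card * k := by
      rw [hce₁]
    rw [h2, hce₁]
    ring
  -- second double sum
  have hsnd : ∑ M₁ ∈ (matchSet F₁).filter (fun M => ∃ f ∈ M, r ∈ f),
        ∑ M₂ ∈ (matchSet F₂).filter (fun M => ∀ f ∈ M, r ∉ f),
        (-1 : ℂ) ^ (M₁.card + M₂.card)
          * z ^ (W₁.card + W₂.card - 1 - (M₁.card + M₂.card) * k)
      = (mPolyC W₁.card k F₁ z
            - z * mPolyC (W₁.erase r).card k (F₁.filter (fun f => r ∉ f)) z)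
          * mPolyC (W₂.erase r).card k (F₂.filter (fun f => r ∉ f)) z := by
    have hinner : ∀ M₁ ∈ (matchSet F₁).filter (fun M => ∃ f ∈ M, r ∈ f),
        ∑ M₂ ∈ (matchSet F₂).filter (fun M => ∀ f ∈ M, r ∉ f),
          (-1 : ℂ) ^ (M₁.card + M₂.card)
            * z ^ (W₁.card + W₂.card - 1 - (M₁.card + M₂.card) * k)
        = ((-1 : ℂ) ^ M₁.card * z ^ (W₁.card - M₁.card * k))
            * mPolyC (W₂.erase r).card k (F₂.filter (fun f => r ∉ f)) z := by
      intro M₁ hM₁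
      rw [Finset.mem_filter] at hM₁
      have hb1 := hbnd₁ M₁ hM₁.1
      rw [matchSet_filter_not_uses, mPolyC_eq_sum, Finset.mul_sum]
      refine Finset.sum_congr rfl (fun M₂ hM₂ => ?_)
      have hb2 := hbnd₂0 M₂ hM₂
      have : W₁.card + W₂.card - 1 - (M₁.card + M₂.card) * k
          = (W₁.card - M₁.card * k) + (W₂.card - 1 - M₂.card * k) := by
        rw [add_mul]; omega
      rw [this, hce₂, pow_add, pow_add]
      have h2 : W₂.card - 1 - M₂.card * k = (W₂.erase r).card - M₂.card * k := by
        rw [hce₂]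
      rw [h2, hce₂]
      ring
    rw [Finset.sum_congr rfl hinner, ← Finset.sum_mul]
    congr 1
    -- ∑ over B₁ of (-1)^t z^(W₁.card - tk) = φ₁ - z φ₁₀
    have hfull := Finset.sum_filter_add_sum_filter_not (matchSet F₁)
      (fun M => ∃ f ∈ M, r ∈ f)
      (fun M => (-1 : ℂ) ^ M.card * z ^ (W₁.card - M.card * k))
    have hA : ∑ M ∈ (matchSet F₁).filter (fun M => ¬ ∃ f ∈ M, r ∈ f),
          (-1 : ℂ) ^ M.card * z ^ (W₁.card - M.card * k)
        = z * mPolyC (W₁.erase r).card k (F₁.filter (fun f => r ∉ f)) z := by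
      have : (matchSet F₁).filter (fun M => ¬ ∃ f ∈ M, r ∈ f)
          = (matchSet F₁).filter (fun M => ∀ f ∈ M, r ∉ f) := by
        refine Finset.filter_congr (fun M _ => ?_)
        push_neg
        rfl
      rw [this, matchSet_filter_not_uses, mPolyC_eq_sum, Finset.mul_sum]
      refine Finset.sum_congr rfl (fun M hM => ?_)
      have hb := hbnd₁0 M hM
      have : W₁.card - M.card * k = 1 + ((W₁.erase r).card - M.card * k) := by
        rw [hce₁]; omega
      rw [this, pow_add, pow_one]
      ring
    rw [← mPolyC_eq_sum] at hfull
    rw [eq_sub_iff_add_eq, ← hA, hfull]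
  rw [hfst, hsnd]
  ring

inductive RTree {α : Type*} [DecidableEq α] (k : ℕ) : α → Finset α → Finset (Finset α) → Prop
  | point (r : α) : RTree k r {r} ∅
  | glue {r : α} {W₁ F₁ W₂ F₂} : RTree k r W₁ F₁ → RTree k r W₂ F₂ → W₁ ∩ W₂ = {r} →
      RTree k r (W₁ ∪ W₂) (F₁ ∪ F₂)
  | extend (r : α) (f : Finset α) (W : α → Finset α) (F : α → Finset (Finset α)) :
      f.card = k → r ∈ f →
      (∀ w ∈ f.erase r, RTree k w (W w) (F w)) →
      (∀ w ∈ f.erase r, (W w) ∩ f = {w}) →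
      (∀ w ∈ f.erase r, ∀ w' ∈ f.erase r, w ≠ w' → Disjoint (W w) (W w')) →
      RTree k r (f ∪ (f.erase r).biUnion W) (insert f ((f.erase r).biUnion F))

lemma RTree.mem_root {α : Type*} [DecidableEq α] {k : ℕ} {r : α} {W : Finset α}
    {F : Finset (Finset α)} (h : RTree k r W F) : r ∈ W := by
  induction h with
  | point r => exact Finset.mem_singleton_self r
  | glue h₁ h₂ hI ih₁ ih₂ => exact Finset.mem_union_left _ ih₁
  | extend r f W F hcard hrf hsub hint hdisj ih => exact Finset.mem_union_left _ hrf

lemma RTree.supp {α : Type*} [DecidableEq α] {k : ℕ} {r : α} {W : Finset α}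
    {F : Finset (Finset α)} (h : RTree k r W F) : EdgeSupp k F W := by
  induction h with
  | point r => exact fun f hf => absurd hf (Finset.notMem_empty f)
  | glue h₁ h₂ hI ih₁ ih₂ =>
    intro f hf
    rcases Finset.mem_union.mp hf with h | h
    · exact ⟨(ih₁ f h).1.trans Finset.subset_union_left, (ih₁ f h).2⟩
    · exact ⟨(ih₂ f h).1.trans Finset.subset_union_right, (ih₂ f h).2⟩
  | extend r f W F hcard hrf hsub hint hdisj ih =>
    intro g hg
    rcases Finset.mem_insert.mp hg with h | h
    · subst h; exact ⟨Finset.subset_union_left, hcard⟩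
    · rcases Finset.mem_biUnion.mp h with ⟨w, hw, hgw⟩
      exact ⟨((ih w hw) g hgw).1.trans ((Finset.subset_biUnion_of_mem W hw).trans
        Finset.subset_union_right), ((ih w hw) g hgw).2⟩

lemma biUnion_update_union {α β : Type*} [DecidableEq α] [DecidableEq β] {s : Finset α}
    {w₀ : α} (h : w₀ ∈ s) (W : α → Finset β) (B : Finset β) :
    s.biUnion (Function.update W w₀ (W w₀ ∪ B)) = s.biUnion W ∪ B := by
  ext x
  simp only [Finset.mem_biUnion, Finset.mem_union, Function.update_apply]
  constructor
  · rintro ⟨w, hw, hx⟩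
    by_cases hww : w = w₀
    · rw [if_pos hww] at hx
      rcases Finset.mem_union.mp hx with h' | h'
      · exact Or.inl ⟨w₀, h, h'⟩
      · exact Or.inr h'
    · rw [if_neg hww] at hx
      exact Or.inl ⟨w, hw, hx⟩
  · rintro (⟨w, hw, hx⟩ | hx)
    · by_cases hww : w = w₀
      · subst hww
        exact ⟨w, hw, by rw [if_pos rfl]; exact Finset.mem_union_left _ hx⟩
      · exact ⟨w, hw, by rw [if_neg hww]; exact hx⟩
    · exact ⟨w₀, h, by rw [if_pos rfl]; exact Finset.mem_union_right _ hx⟩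

lemma rtree_edge {α : Type*} [DecidableEq α] {k : ℕ} {e : Finset α} {r : α}
    (hcard : e.card = k) (hre : r ∈ e) : RTree k r e {e} := by
  have h := RTree.extend (k := k) r e (fun w => {w}) (fun _ => ∅) hcard hre
    (fun w _ => RTree.point w)
    (fun w hw => by
      rw [Finset.singleton_inter_of_mem (Finset.mem_of_mem_erase hw)])
    (fun w hw w' hw' hne => Finset.disjoint_singleton.mpr hne)
  have h1 : e ∪ (e.erase r).biUnion (fun w => {w}) = e := by
    rw [Finset.biUnion_singleton_eq_self]
    exact Finset.union_eq_left.mpr (Finset.erase_subset r e)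
  have h2 : insert e ((e.erase r).biUnion (fun _ => (∅ : Finset (Finset α)))) = {e} := by
    have h3 : (e.erase r).biUnion (fun _ => (∅ : Finset (Finset α))) = ∅ := by
      ext g; simp
    rw [h3, LawfulSingleton.insert_empty_eq]
  rwa [h1, h2] at h

lemma rtree_graft {α : Type*} [DecidableEq α] {k : ℕ} {W : Finset α} {F : Finset (Finset α)}
    {c : α} (hT : RTree k c W F) {e : Finset α} {r : α} (hcard : e.card = k)
    (hint : e ∩ W = {c}) (hre : r ∈ e) (hrW : r ∉ W) :
    RTree k r (W ∪ e) (insert e F) := by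
  have hce : c ∈ e := by
    have : c ∈ e ∩ W := hint ▸ Finset.mem_singleton_self c
    exact (Finset.mem_inter.mp this).1
  have hcW : c ∈ W := hT.mem_root
  have hrc : r ≠ c := fun h => hrW (h ▸ hcW)
  have hcer : c ∈ e.erase r := Finset.mem_erase.mpr ⟨Ne.symm hrc, hce⟩
  have cond1 : ∀ w ∈ e.erase r, RTree k w (if w = c then W else {w}) (if w = c then F else ∅) := by
    intro w hw
    by_cases hwc : w = c
    · rw [if_pos hwc, if_pos hwc, hwc]
      exact hT
    · rw [if_neg hwc, if_neg hwc]
      exact RTree.point w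
  have cond2 : ∀ w ∈ e.erase r, (if w = c then W else {w}) ∩ e = {w} := by
    intro w hw
    by_cases hwc : w = c
    · rw [if_pos hwc, Finset.inter_comm, hint, hwc]
    · rw [if_neg hwc, Finset.singleton_inter_of_mem (Finset.mem_of_mem_erase hw)]
  have cond3 : ∀ w ∈ e.erase r, ∀ w' ∈ e.erase r, w ≠ w' →
      Disjoint (if w = c then W else {w}) (if w' = c then W else {w'}) := by
    intro w hw w' hw' hne
    by_cases hwc : w = c <;> by_cases hwc' : w' = c
    · exact absurd (hwc.trans hwc'.symm) hne
    · rw [if_pos hwc, if_neg hwc', Finset.disjoint_singleton_right]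
      intro hW
      have : w' ∈ e ∩ W := Finset.mem_inter.mpr ⟨Finset.mem_of_mem_erase hw', hW⟩
      rw [hint, Finset.mem_singleton] at this
      exact hwc' (this.trans hwc.symm ▸ this)
    · rw [if_pos hwc', if_neg hwc, Finset.disjoint_singleton_left]
      intro hW
      have : w ∈ e ∩ W := Finset.mem_inter.mpr ⟨Finset.mem_of_mem_erase hw, hW⟩
      rw [hint, Finset.mem_singleton] at this
      exact hwc (this.trans hwc'.symm ▸ this)
    · rw [if_neg hwc, if_neg hwc', Finset.disjoint_singleton_right, Finset.mem_singleton]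
      exact fun h => hne h.symm
  have h := RTree.extend (k := k) r e (fun w => if w = c then W else {w})
    (fun w => if w = c then F else ∅) hcard hre cond1 cond2 cond3
  have h1 : e ∪ (e.erase r).biUnion (fun w => if w = c then W else {w}) = W ∪ e := by
    ext x
    simp only [Finset.mem_union, Finset.mem_biUnion]
    constructor
    · rintro (hx | ⟨w, hw, hx⟩)
      · exact Or.inr hx
      · by_cases hwc : w = c
        · rw [if_pos hwc] at hx; exact Or.inl hx
        · rw [if_neg hwc, Finset.mem_singleton] at hx
          exact Or.inr (hx ▸ Finset.mem_of_mem_erase hw)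
    · rintro (hx | hx)
      · exact Or.inr ⟨c, hcer, by rw [if_pos rfl]; exact hx⟩
      · exact Or.inl hx
  have h2 : insert e ((e.erase r).biUnion (fun w => if w = c then F else ∅)) = insert e F := by
    congr 1
    ext g
    simp only [Finset.mem_biUnion]
    constructor
    · rintro ⟨w, hw, hg⟩
      by_cases hwc : w = c
      · rwa [if_pos hwc] at hg
      · rw [if_neg hwc] at hg; exact absurd hg (Finset.notMem_empty g)
    · intro hg
      exact ⟨c, hcer, by rw [if_pos rfl]; exact hg⟩
  rwa [h1, h2] at h

lemma rtree_attach {α : Type*} [DecidableEq α] {k : ℕ} {r : α} {W : Finset α}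
    {F : Finset (Finset α)} (hT : RTree k r W F) :
    ∀ {e : Finset α} {c : α}, e.card = k → e ∩ W = {c} →
      RTree k r (W ∪ e) (insert e F) := by
  induction hT with
  | point r =>
    intro e c hcard hint
    have hce : c ∈ e ∧ c ∈ ({r} : Finset α) := by
      have : c ∈ e ∩ {r} := hint ▸ Finset.mem_singleton_self c
      exact Finset.mem_inter.mp this
    have hcr : c = r := Finset.mem_singleton.mp hce.2
    have hre : r ∈ e := hcr ▸ hce.1
    have h1 : ({r} : Finset α) ∪ e = e := Finset.union_eq_right.mpr
      (Finset.singleton_subset_iff.mpr hre)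
    have h2 : insert e (∅ : Finset (Finset α)) = {e} := by
      rw [LawfulSingleton.insert_empty_eq]
    rw [h1, h2]
    exact rtree_edge hcard hre
  | @glue r W₁ F₁ W₂ F₂ h₁ h₂ hI ih₁ ih₂ =>
    intro e c hcard hint
    have hce : c ∈ e ∧ c ∈ W₁ ∪ W₂ := by
      have : c ∈ e ∩ (W₁ ∪ W₂) := hint ▸ Finset.mem_singleton_self c
      exact Finset.mem_inter.mp this
    by_cases hcW₁ : c ∈ W₁
    · have hint₁ : e ∩ W₁ = {c} := by
        apply Finset.Subset.antisymm
        · intro x hx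
          rw [Finset.mem_inter] at hx
          have : x ∈ e ∩ (W₁ ∪ W₂) := Finset.mem_inter.mpr ⟨hx.1, Finset.mem_union_left _ hx.2⟩
          exact hint ▸ this
        · exact Finset.singleton_subset_iff.mpr (Finset.mem_inter.mpr ⟨hce.1, hcW₁⟩)
      have t1 := ih₁ hcard hint₁
      have hI' : (W₁ ∪ e) ∩ W₂ = {r} := by
        rw [Finset.union_inter_distrib_right, hI]
        apply Finset.Subset.antisymm
        · apply Finset.union_subset (le_refl _)
          intro x hx
          rw [Finset.mem_inter] at hx
          have hxc : x = c := by
            have : x ∈ e ∩ (W₁ ∪ W₂) := Finset.mem_inter.mpr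
              ⟨hx.1, Finset.mem_union_right _ hx.2⟩
            rw [hint, Finset.mem_singleton] at this
            exact this
          subst hxc
          have : x ∈ W₁ ∩ W₂ := Finset.mem_inter.mpr ⟨hcW₁, hx.2⟩
          rw [hI] at this
          exact this
        · exact Finset.subset_union_left
      have t := RTree.glue t1 h₂ hI'
      have hs : (W₁ ∪ e) ∪ W₂ = (W₁ ∪ W₂) ∪ e := by
        rw [Finset.union_right_comm]
      have hf : insert e F₁ ∪ F₂ = insert e (F₁ ∪ F₂) := Finset.insert_union e F₁ F₂
      rwa [hs, hf] at t
    · have hcW₂ : c ∈ W₂ := by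
        rcases Finset.mem_union.mp hce.2 with h | h
        · exact absurd h hcW₁
        · exact h
      have hint₂ : e ∩ W₂ = {c} := by
        apply Finset.Subset.antisymm
        · intro x hx
          rw [Finset.mem_inter] at hx
          have : x ∈ e ∩ (W₁ ∪ W₂) := Finset.mem_inter.mpr ⟨hx.1, Finset.mem_union_right _ hx.2⟩
          exact hint ▸ this
        · exact Finset.singleton_subset_iff.mpr (Finset.mem_inter.mpr ⟨hce.1, hcW₂⟩)
      have t2 := ih₂ hcard hint₂
      have hI' : W₁ ∩ (W₂ ∪ e) = {r} := by
        rw [Finset.inter_union_distrib_left, hI]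
        apply Finset.Subset.antisymm
        · apply Finset.union_subset (le_refl _)
          intro x hx
          rw [Finset.mem_inter] at hx
          have hxc : x = c := by
            have : x ∈ e ∩ (W₁ ∪ W₂) := Finset.mem_inter.mpr
              ⟨hx.2, Finset.mem_union_left _ hx.1⟩
            rw [hint, Finset.mem_singleton] at this
            exact this
          subst hxc
          exact absurd hx.1 hcW₁
        · exact Finset.subset_union_left
      have t := RTree.glue h₁ t2 hI'
      have hs : W₁ ∪ (W₂ ∪ e) = (W₁ ∪ W₂) ∪ e := (Finset.union_assoc W₁ W₂ e).symm
      have hf : F₁ ∪ insert e F₂ = insert e (F₁ ∪ F₂) := Finset.union_insert e F₁ F₂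
      rwa [hs, hf] at t
  | extend r f W F hcard hrf hsub hint hdisj ih =>
    intro e c hecard hintc
    have hce : c ∈ e ∧ c ∈ f ∪ (f.erase r).biUnion W := by
      have : c ∈ e ∩ (f ∪ (f.erase r).biUnion W) := hintc ▸ Finset.mem_singleton_self c
      exact Finset.mem_inter.mp this
    have T₀ := RTree.extend (k := k) r f W F hcard hrf hsub hint hdisj
    by_cases hcr : c = r
    · have hre : r ∈ e := hcr ▸ hce.1
      have hI' : (f ∪ (f.erase r).biUnion W) ∩ e = {r} := by
        rw [Finset.inter_comm, hintc, hcr]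
      have t := RTree.glue T₀ (rtree_edge hecard hre) hI'
      have hf2 : insert f ((f.erase r).biUnion F) ∪ {e}
          = insert e (insert f ((f.erase r).biUnion F)) := by
        rw [Finset.union_comm, ← Finset.insert_eq]
      rwa [hf2] at t
    · -- c ≠ r : c lives in some subtree W w₀
      have hex : ∃ w₀ ∈ f.erase r, c ∈ W w₀ := by
        rcases Finset.mem_union.mp hce.2 with h | h
        · have hcf : c ∈ f.erase r := Finset.mem_erase.mpr ⟨hcr, h⟩
          exact ⟨c, hcf, (hsub c hcf).mem_root⟩
        · exact Finset.mem_biUnion.mp h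
      rcases hex with ⟨w₀, hw₀, hcw₀⟩
      have hintw : e ∩ W w₀ = {c} := by
        apply Finset.Subset.antisymm
        · intro x hx
          rw [Finset.mem_inter] at hx
          have : x ∈ e ∩ (f ∪ (f.erase r).biUnion W) := Finset.mem_inter.mpr
            ⟨hx.1, Finset.mem_union_right _ (Finset.mem_biUnion.mpr ⟨w₀, hw₀, hx.2⟩)⟩
          exact hintc ▸ this
        · exact Finset.singleton_subset_iff.mpr (Finset.mem_inter.mpr ⟨hce.1, hcw₀⟩)
      have t := ih w₀ hw₀ hecard hintw
      have hmemc : ∀ w ∈ f.erase r, c ∈ W w → w = w₀ := by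
        intro w hw hcw
        by_contra hne
        exact Finset.disjoint_left.mp (hdisj w hw w₀ hw₀ hne) hcw hcw₀
      have cond1 : ∀ w ∈ f.erase r,
          RTree k w (Function.update W w₀ (W w₀ ∪ e) w)
            (Function.update F w₀ (F w₀ ∪ {e}) w) := by
        intro w hw
        by_cases hwe : w = w₀
        · subst hwe
          rw [Function.update_self, Function.update_self]
          have : F w ∪ {e} = insert e (F w) := by
            rw [Finset.union_comm, ← Finset.insert_eq]
          rw [this]
          exact t
        · rw [Function.update_of_ne hwe, Function.update_of_ne hwe]
          exact hsub w hw
      have cond2 : ∀ w ∈ f.erase r, (Function.update W w₀ (W w₀ ∪ e) w) ∩ f = {w} := by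
        intro w hw
        by_cases hwe : w = w₀
        · subst hwe
          rw [Function.update_self, Finset.union_inter_distrib_right, hint w hw]
          apply Finset.Subset.antisymm
          · apply Finset.union_subset (le_refl _)
            intro x hx
            rw [Finset.mem_inter] at hx
            have hxc : x = c := by
              have : x ∈ e ∩ (f ∪ (f.erase r).biUnion W) := Finset.mem_inter.mpr
                ⟨hx.1, Finset.mem_union_left _ hx.2⟩
              rw [hintc, Finset.mem_singleton] at this
              exact this
            subst hxc
            have hcf : x ∈ f.erase r := Finset.mem_erase.mpr ⟨hcr, hx.2⟩
            rw [Finset.mem_singleton]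
            exact hmemc x hcf (hsub x hcf).mem_root
          · exact Finset.subset_union_left
        · rw [Function.update_of_ne hwe]
          exact hint w hw
      have cond3 : ∀ w ∈ f.erase r, ∀ w' ∈ f.erase r, w ≠ w' →
          Disjoint (Function.update W w₀ (W w₀ ∪ e) w)
            (Function.update W w₀ (W w₀ ∪ e) w') := by
        have key : ∀ w ∈ f.erase r, w ≠ w₀ → Disjoint (W w₀ ∪ e) (W w) := by
          intro w hw hne
          rw [Finset.disjoint_union_left]
          refine ⟨hdisj w₀ hw₀ w hw (fun h => hne h.symm), ?_⟩
          rw [Finset.disjoint_left]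
          intro x hxe hxW
          have hxc : x = c := by
            have : x ∈ e ∩ (f ∪ (f.erase r).biUnion W) := Finset.mem_inter.mpr
              ⟨hxe, Finset.mem_union_right _ (Finset.mem_biUnion.mpr ⟨w, hw, hxW⟩)⟩
            rw [hintc, Finset.mem_singleton] at this
            exact this
          subst hxc
          exact hne (hmemc w hw hxW)
        intro w hw w' hw' hne
        by_cases hwe : w = w₀ <;> by_cases hwe' : w' = w₀
        · exact absurd (hwe.trans hwe'.symm) hne
        · subst hwe
          rw [Function.update_self, Function.update_of_ne hwe']
          exact key w' hw' hwe'
        · subst hwe'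
          rw [Function.update_self, Function.update_of_ne hwe]
          exact (key w hw hwe).symm
        · rw [Function.update_of_ne hwe, Function.update_of_ne hwe']
          exact hdisj w hw w' hw' hne
      have h := RTree.extend (k := k) r f (Function.update W w₀ (W w₀ ∪ e))
        (Function.update F w₀ (F w₀ ∪ {e})) hcard hrf cond1 cond2 cond3
      have hs : f ∪ (f.erase r).biUnion (Function.update W w₀ (W w₀ ∪ e))
          = (f ∪ (f.erase r).biUnion W) ∪ e := by
        rw [biUnion_update_union hw₀, Finset.union_assoc]
      have hf2 : insert f ((f.erase r).biUnion (Function.update F w₀ (F w₀ ∪ {e})))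
          = insert e (insert f ((f.erase r).biUnion F)) := by
        rw [biUnion_update_union hw₀]
        rw [Finset.union_comm, ← Finset.insert_eq, Finset.insert_comm e f]
      rwa [hs, hf2] at h

lemma hypertree_supp {α : Type*} [DecidableEq α] {k : ℕ} {V : Finset α}
    {E : Finset (Finset α)} (h : IsHypertree k V E) : EdgeSupp k E V := by
  induction h with
  | single v => exact fun f hf => absurd hf (Finset.notMem_empty f)
  | attach e hT hcard hint ih =>
    intro f hf
    rcases Finset.mem_insert.mp hf with h | h
    · subst h; exact ⟨Finset.subset_union_right, hcard⟩
    · exact ⟨(ih f h).1.trans Finset.subset_union_left, (ih f h).2⟩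

lemma hypertree_cover {α : Type*} [DecidableEq α] {k : ℕ} {V : Finset α}
    {E : Finset (Finset α)} (h : IsHypertree k V E) :
    ∀ x ∈ V, V = {x} ∨ ∃ f ∈ E, x ∈ f := by
  induction h with
  | single v =>
    intro x hx
    rw [Finset.mem_singleton] at hx
    exact Or.inl (hx ▸ rfl)
  | @attach V' E' e hT hcard hint ih =>
    intro x hx
    rcases Finset.mem_union.mp hx with h | h
    · rcases ih x h with h' | ⟨f, hf, hxf⟩
      · right
        refine ⟨e, Finset.mem_insert_self e E', ?_⟩
        have : e ∩ V' = e ∩ {x} := by rw [h']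
        rcases Finset.card_eq_one.mp hint with ⟨c, hc⟩
        have hce : c ∈ e ∩ V' := hc ▸ Finset.mem_singleton_self c
        rw [Finset.mem_inter, h', Finset.mem_singleton] at hce
        exact hce.2 ▸ hce.1
      · exact Or.inr ⟨f, Finset.mem_insert_of_mem hf, hxf⟩
    · exact Or.inr ⟨e, Finset.mem_insert_self e E', h⟩

lemma hypertree_rtree {α : Type*} [DecidableEq α] {k : ℕ} {V : Finset α}
    {E : Finset (Finset α)} (h : IsHypertree k V E) : ∀ r ∈ V, RTree k r V E := by
  induction h with
  | single v =>
    intro r hr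
    rw [Finset.mem_singleton] at hr
    subst hr
    exact RTree.point r
  | @attach V' E' e hT hcard hint ih =>
    intro r hr
    rcases Finset.card_eq_one.mp hint with ⟨c, hc⟩
    have hcV : c ∈ V' := by
      have : c ∈ e ∩ V' := hc ▸ Finset.mem_singleton_self c
      exact (Finset.mem_inter.mp this).2
    rcases Finset.mem_union.mp hr with hrV | hre
    · exact rtree_attach (ih r hrV) hcard hc
    · by_cases hrV : r ∈ V'
      · exact rtree_attach (ih r hrV) hcard hc
      · exact rtree_graft (ih c hcV) hcard hc hre hrV

open Classical in
lemma key_lemma {α : Type*} [DecidableEq α] {k : ℕ} (hk : 2 ≤ k) (lam : ℂ) (p : α → ℂ)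
    {r : α} {W : Finset α} {F : Finset (Finset α)} (hT : RTree k r W F) :
    (∀ v ∈ W, p v ≠ 0) →
    (∀ v ∈ W.erase r,
      lam * p v ^ (k - 1) = ∑ f ∈ F.filter (fun f => v ∈ f), ∏ w ∈ f.erase v, p w) →
    mPolyC (W.erase r).card k (F.filter (fun f => r ∉ f)) lam
      * (lam * p r ^ (k - 1) - ∑ f ∈ F.filter (fun f => r ∈ f), ∏ w ∈ f.erase r, p w)
      = p r ^ (k - 1) * mPolyC W.card k F lam := by
  have hk0 : k ≠ 0 := by omega
  induction hT with
  | point r =>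
    intro hp0 heig
    rw [Finset.erase_singleton]
    simp [mPolyC_empty]
    ring
  | @glue r W₁ F₁ W₂ F₂ h₁ h₂ hI ih₁ ih₂ =>
    intro hp0 heig
    have supp₁ := h₁.supp
    have supp₂ := h₂.supp
    have hr₁ : r ∈ W₁ := h₁.mem_root
    have hr₂ : r ∈ W₂ := h₂.mem_root
    have hrI : ∀ x, x ∈ W₁ → x ∈ W₂ → x = r := by
      intro x hx1 hx2
      have : x ∈ W₁ ∩ W₂ := Finset.mem_inter.mpr ⟨hx1, hx2⟩
      rw [hI, Finset.mem_singleton] at this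
      exact this
    have hFF : Disjoint F₁ F₂ := by
      rw [Finset.disjoint_left]
      intro g h1 h2
      have hsub : g ⊆ W₁ ∩ W₂ := Finset.subset_inter (supp₁ g h1).1 (supp₂ g h2).1
      rw [hI] at hsub
      have := Finset.card_le_card hsub
      rw [Finset.card_singleton, (supp₁ g h1).2] at this
      omega
    -- eigen transfer
    have heig₁ : ∀ v ∈ W₁.erase r,
        lam * p v ^ (k - 1) = ∑ f ∈ F₁.filter (fun f => v ∈ f), ∏ w ∈ f.erase v, p w := by
      intro v hv
      rw [Finset.mem_erase] at hv
      have hv' : v ∈ (W₁ ∪ W₂).erase r :=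
        Finset.mem_erase.mpr ⟨hv.1, Finset.mem_union_left _ hv.2⟩
      rw [heig v hv', Finset.filter_union]
      have h2empty : F₂.filter (fun f => v ∈ f) = ∅ := by
        rw [Finset.filter_eq_empty_iff]
        intro g hg hvg
        exact hv.1 (hrI v hv.2 ((supp₂ g hg).1 hvg))
      rw [h2empty, Finset.union_empty]
    have heig₂ : ∀ v ∈ W₂.erase r,
        lam * p v ^ (k - 1) = ∑ f ∈ F₂.filter (fun f => v ∈ f), ∏ w ∈ f.erase v, p w := by
      intro v hv
      rw [Finset.mem_erase] at hv
      have hv' : v ∈ (W₁ ∪ W₂).erase r :=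
        Finset.mem_erase.mpr ⟨hv.1, Finset.mem_union_right _ hv.2⟩
      rw [heig v hv', Finset.filter_union]
      have h1empty : F₁.filter (fun f => v ∈ f) = ∅ := by
        rw [Finset.filter_eq_empty_iff]
        intro g hg hvg
        exact hv.1 (hrI v ((supp₁ g hg).1 hvg) hv.2)
      rw [h1empty, Finset.empty_union]
    have key₁ := ih₁ (fun v hv => hp0 v (Finset.mem_union_left _ hv)) heig₁
    have key₂ := ih₂ (fun v hv => hp0 v (Finset.mem_union_right _ hv)) heig₂
    -- set identities
    have herase : (W₁ ∪ W₂).erase r = (W₁.erase r) ∪ (W₂.erase r) :=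
      Finset.erase_union_distrib W₁ W₂ r
    have herdisj : Disjoint (W₁.erase r) (W₂.erase r) := by
      rw [Finset.disjoint_left]
      intro x hx1 hx2
      rw [Finset.mem_erase] at hx1 hx2
      exact hx1.1 (hrI x hx1.2 hx2.2)
    have hcarderase : ((W₁ ∪ W₂).erase r).card = (W₁.erase r).card + (W₂.erase r).card := by
      rw [herase]
      exact Finset.card_union_of_disjoint herdisj
    have hS₁0 : EdgeSupp k (F₁.filter (fun f => r ∉ f)) (W₁.erase r) := by
      intro g hg
      rw [Finset.mem_filter] at hg
      exact ⟨fun x hx => Finset.mem_erase.mpr ⟨fun h => hg.2 (h ▸ hx), (supp₁ g hg.1).1 hx⟩,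
        (supp₁ g hg.1).2⟩
    have hS₂0 : EdgeSupp k (F₂.filter (fun f => r ∉ f)) (W₂.erase r) := by
      intro g hg
      rw [Finset.mem_filter] at hg
      exact ⟨fun x hx => Finset.mem_erase.mpr ⟨fun h => hg.2 (h ▸ hx), (supp₂ g hg.1).1 hx⟩,
        (supp₂ g hg.1).2⟩
    have hphi0 : mPolyC (((W₁ ∪ W₂).erase r).card) k ((F₁ ∪ F₂).filter (fun f => r ∉ f)) lam
        = mPolyC (W₁.erase r).card k (F₁.filter (fun f => r ∉ f)) lam
          * mPolyC (W₂.erase r).card k (F₂.filter (fun f => r ∉ f)) lam := by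
      rw [hcarderase, Finset.filter_union]
      exact mPolyC_union hk0 hS₁0 hS₂0 herdisj lam
    have hcardW : (W₁ ∪ W₂).card = W₁.card + W₂.card - 1 := by
      have := Finset.card_union_add_card_inter W₁ W₂
      rw [hI, Finset.card_singleton] at this
      omega
    have hphi : mPolyC ((W₁ ∪ W₂).card) k (F₁ ∪ F₂) lam
        = mPolyC W₁.card k F₁ lam
            * mPolyC (W₂.erase r).card k (F₂.filter (fun f => r ∉ f)) lam
          + mPolyC (W₁.erase r).card k (F₁.filter (fun f => r ∉ f)) lam
            * mPolyC W₂.card k F₂ lam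
          - lam * (mPolyC (W₁.erase r).card k (F₁.filter (fun f => r ∉ f)) lam
            * mPolyC (W₂.erase r).card k (F₂.filter (fun f => r ∉ f)) lam) := by
      rw [hcardW]
      exact mPolyC_glue hk supp₁ supp₂ hI lam
    have hsum : ∑ f ∈ (F₁ ∪ F₂).filter (fun f => r ∈ f), ∏ w ∈ f.erase r, p w
        = (∑ f ∈ F₁.filter (fun f => r ∈ f), ∏ w ∈ f.erase r, p w)
          + ∑ f ∈ F₂.filter (fun f => r ∈ f), ∏ w ∈ f.erase r, p w := by
      rw [Finset.filter_union]
      exact Finset.sum_union (hFF.mono (Finset.filter_subset _ _) (Finset.filter_subset _ _))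
    rw [hphi0, hphi, hsum]
    linear_combination (mPolyC (W₂.erase r).card k (F₂.filter (fun f => r ∉ f)) lam) * key₁
      + (mPolyC (W₁.erase r).card k (F₁.filter (fun f => r ∉ f)) lam) * key₂
  | extend r f W F hcard hrf hsub hint hdisj ih =>
    intro hp0 heig
    set s := f.erase r with hs
    have hcs : s.card = k - 1 := by
      rw [hs, Finset.card_erase_of_mem hrf, hcard]
    have hroot : ∀ w ∈ s, w ∈ W w := fun w hw => (hsub w hw).mem_root
    have hsupp : ∀ w ∈ s, EdgeSupp k (F w) (W w) := fun w hw => (hsub w hw).supp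
    have hrnot : ∀ w ∈ s, r ∉ W w := by
      intro w hw hrW
      have : r ∈ W w ∩ f := Finset.mem_inter.mpr ⟨hrW, hrf⟩
      rw [hint w hw, Finset.mem_singleton] at this
      exact (Finset.mem_erase.mp hw).1 this.symm
    have huniq : ∀ x, ∀ w ∈ s, ∀ w' ∈ s, x ∈ W w → x ∈ W w' → w = w' := by
      intro x w hw w' hw' hx hx'
      by_contra hne
      exact Finset.disjoint_left.mp (hdisj w hw w' hw' hne) hx hx'
    have hsubbig : ∀ w ∈ s, W w ⊆ f ∪ s.biUnion W := fun w hw =>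
      (Finset.subset_biUnion_of_mem W hw).trans Finset.subset_union_right
    have hbir : r ∉ s.biUnion W := by
      intro h
      rcases Finset.mem_biUnion.mp h with ⟨w, hw, hrw⟩
      exact hrnot w hw hrw
    have hbigW : f ∪ s.biUnion W = insert r (s.biUnion W) := by
      apply Finset.Subset.antisymm
      · apply Finset.union_subset
        · intro x hx
          by_cases hxr : x = r
          · rw [hxr]; exact Finset.mem_insert_self r _
          · have hxs : x ∈ s := Finset.mem_erase.mpr ⟨hxr, hx⟩
            exact Finset.mem_insert_of_mem
              (Finset.mem_biUnion.mpr ⟨x, hxs, hroot x hxs⟩)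
        · exact Finset.subset_insert _ _
      · intro x hx
        rcases Finset.mem_insert.mp hx with h | h
        · exact h ▸ Finset.mem_union_left _ hrf
        · exact Finset.mem_union_right _ h
    have herase : (f ∪ s.biUnion W).erase r = s.biUnion W := by
      rw [hbigW, Finset.erase_insert hbir]
    have hcardbi : (s.biUnion W).card = ∑ w ∈ s, (W w).card := Finset.card_biUnion hdisj
    have hcardbig : (f ∪ s.biUnion W).card = (∑ w ∈ s, (W w).card) + 1 := by
      rw [hbigW, Finset.card_insert_of_notMem hbir, hcardbi]
    -- edges of F w do not contain r, nor does f belong to F w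
    have hfnotin : f ∉ s.biUnion F := by
      intro h
      rcases Finset.mem_biUnion.mp h with ⟨w, hw, hfw⟩
      have hsubw : f ⊆ W w := (hsupp w hw f hfw).1
      have : f ⊆ {w} := by
        intro x hx
        have : x ∈ W w ∩ f := Finset.mem_inter.mpr ⟨hsubw hx, hx⟩
        rw [hint w hw] at this
        exact this
      have := Finset.card_le_card this
      rw [hcard, Finset.card_singleton] at this
      omega
    have hFr : (insert f (s.biUnion F)).filter (fun g => r ∈ g) = {f} := by
      ext g
      rw [Finset.mem_filter, Finset.mem_singleton]
      constructor
      · rintro ⟨hg, hrg⟩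
        rcases Finset.mem_insert.mp hg with h | h
        · exact h
        · rcases Finset.mem_biUnion.mp h with ⟨w, hw, hgw⟩
          exact absurd ((hsupp w hw g hgw).1 hrg) (hrnot w hw)
      · rintro rfl
        exact ⟨Finset.mem_insert_self _ _, hrf⟩
    have hFnr : (insert f (s.biUnion F)).filter (fun g => r ∉ g) = s.biUnion F := by
      ext g
      rw [Finset.mem_filter]
      constructor
      · rintro ⟨hg, hrg⟩
        rcases Finset.mem_insert.mp hg with h | h
        · exact absurd (h ▸ hrf) hrg
        · exact h
      · intro hg
        rcases Finset.mem_biUnion.mp hg with ⟨w, hw, hgw⟩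
        exact ⟨Finset.mem_insert_of_mem hg, fun hrg =>
          (hrnot w hw) ((hsupp w hw g hgw).1 hrg)⟩
    -- eigen transfer into subtree w
    have heigw : ∀ w ∈ s, ∀ v ∈ (W w).erase w,
        lam * p v ^ (k - 1) = ∑ g ∈ (F w).filter (fun g => v ∈ g), ∏ x ∈ g.erase v, p x := by
      intro w hw v hv
      rw [Finset.mem_erase] at hv
      have hvW : v ∈ W w := hv.2
      have hvr : v ≠ r := fun h => hrnot w hw (h ▸ hvW)
      have hvbig : v ∈ (f ∪ s.biUnion W).erase r := Finset.mem_erase.mpr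
        ⟨hvr, hsubbig w hw hvW⟩
      rw [heig v hvbig]
      congr 1
      ext g
      rw [Finset.mem_filter, Finset.mem_filter]
      constructor
      · rintro ⟨hg, hvg⟩
        rcases Finset.mem_insert.mp hg with h | h
        · exfalso
          subst h
          have hvf : v ∈ W w ∩ g := Finset.mem_inter.mpr ⟨hvW, hvg⟩
          rw [hint w hw, Finset.mem_singleton] at hvf
          exact hv.1 hvf
        · rcases Finset.mem_biUnion.mp h with ⟨w', hw', hgw'⟩
          have : w' = w := huniq v w' hw' w hw ((hsupp w' hw' g hgw').1 hvg) hvW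
          exact ⟨this ▸ hgw', hvg⟩
      · rintro ⟨hg, hvg⟩
        exact ⟨Finset.mem_insert_of_mem (Finset.mem_biUnion.mpr ⟨w, hw, hg⟩), hvg⟩
    -- eigen equation at w itself
    have hfnotFw : ∀ w ∈ s, f ∉ (F w).filter (fun g => w ∈ g) := by
      intro w hw hmem
      have hfw : f ∈ F w := (Finset.mem_filter.mp hmem).1
      have hsubw : f ⊆ W w := (hsupp w hw f hfw).1
      have : f ⊆ {w} := by
        intro x hx
        have : x ∈ W w ∩ f := Finset.mem_inter.mpr ⟨hsubw hx, hx⟩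
        rw [hint w hw] at this
        exact this
      have := Finset.card_le_card this
      rw [hcard, Finset.card_singleton] at this
      omega
    have heigatw : ∀ w ∈ s,
        lam * p w ^ (k - 1) = (∏ x ∈ f.erase w, p x)
          + ∑ g ∈ (F w).filter (fun g => w ∈ g), ∏ x ∈ g.erase w, p x := by
      intro w hw
      have hwf : w ∈ f := Finset.mem_of_mem_erase hw
      have hwr : w ≠ r := (Finset.mem_erase.mp hw).1
      have hwbig : w ∈ (f ∪ s.biUnion W).erase r := Finset.mem_erase.mpr
        ⟨hwr, Finset.mem_union_left _ hwf⟩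
      rw [heig w hwbig]
      have hfilt : (insert f (s.biUnion F)).filter (fun g => w ∈ g)
          = insert f ((F w).filter (fun g => w ∈ g)) := by
        ext g
        rw [Finset.mem_filter, Finset.mem_insert, Finset.mem_insert, Finset.mem_filter]
        constructor
        · rintro ⟨hg, hwg⟩
          rcases hg with h | h
          · exact Or.inl h
          · rcases Finset.mem_biUnion.mp h with ⟨w', hw', hgw'⟩
            have : w' = w := huniq w w' hw' w hw ((hsupp w' hw' g hgw').1 hwg) (hroot w hw)
            exact Or.inr ⟨this ▸ hgw', hwg⟩
        · rintro (rfl | ⟨hg, hwg⟩)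
          · exact ⟨Or.inl rfl, hwf⟩
          · exact ⟨Or.inr (Finset.mem_biUnion.mpr ⟨w, hw, hg⟩), hwg⟩
      rw [hfilt, Finset.sum_insert (hfnotFw w hw)]
    -- per-subtree key identities
    have keyw : ∀ w ∈ s,
        mPolyC ((W w).erase w).card k ((F w).filter (fun g => w ∉ g)) lam
          * (∏ x ∈ f.erase w, p x)
        = p w ^ (k - 1) * mPolyC (W w).card k (F w) lam := by
      intro w hw
      have hkw := ih w hw (fun v hv => hp0 v (hsubbig w hw hv)) (heigw w hw)
      have := heigatw w hw
      rw [← sub_eq_iff_eq_add] at this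
      rw [this] at hkw
      linear_combination hkw
    -- phi computations
    have hphisupp0 : ∀ w ∈ s, EdgeSupp k ((F w).filter (fun g => w ∉ g)) ((W w).erase w) := by
      intro w hw g hg
      rw [Finset.mem_filter] at hg
      exact ⟨fun x hx => Finset.mem_erase.mpr ⟨fun h => hg.2 (h ▸ hx),
        (hsupp w hw g hg.1).1 hx⟩, (hsupp w hw g hg.1).2⟩
    have hphi0 : mPolyC (∑ w ∈ s, (W w).card) k (s.biUnion F) lam
        = ∏ w ∈ s, mPolyC (W w).card k (F w) lam :=
      mPolyC_biUnion hk0 s F W hsupp hdisj lam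
    have hfilterdisj : (s.biUnion F).filter (fun g => Disjoint f g)
        = s.biUnion (fun w => (F w).filter (fun g => w ∉ g)) := by
      ext g
      simp only [Finset.mem_filter, Finset.mem_biUnion]
      constructor
      · rintro ⟨⟨w, hw, hgw⟩, hdisjg⟩
        exact ⟨w, hw, hgw, fun hwg =>
          Finset.disjoint_left.mp hdisjg (Finset.mem_of_mem_erase hw) hwg⟩
      · rintro ⟨w, hw, hgw, hwg⟩
        refine ⟨⟨w, hw, hgw⟩, ?_⟩
        rw [Finset.disjoint_left]
        intro x hxf hxg
        have hxW : x ∈ W w := (hsupp w hw g hgw).1 hxg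
        have : x ∈ W w ∩ f := Finset.mem_inter.mpr ⟨hxW, hxf⟩
        rw [hint w hw, Finset.mem_singleton] at this
        exact hwg (this ▸ hxg)
    have herasedisj : ∀ w ∈ s, ∀ w' ∈ s, w ≠ w' →
        Disjoint ((W w).erase w) ((W w').erase w') := fun w hw w' hw' hne =>
      (hdisj w hw w' hw' hne).mono (Finset.erase_subset _ _) (Finset.erase_subset _ _)
    have hcardsum : ∀ w ∈ s, (W w).card = ((W w).erase w).card + 1 := by
      intro w hw
      rw [Finset.card_erase_of_mem (hroot w hw)]
      have : 1 ≤ (W w).card := Finset.card_pos.mpr ⟨w, hroot w hw⟩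
      omega
    have hphi2 : mPolyC (∑ w ∈ s, ((W w).erase w).card) k
        ((s.biUnion F).filter (fun g => Disjoint f g)) lam
        = ∏ w ∈ s, mPolyC ((W w).erase w).card k ((F w).filter (fun g => w ∉ g)) lam := by
      rw [hfilterdisj]
      exact mPolyC_biUnion hk0 s _ (fun w => (W w).erase w) hphisupp0 herasedisj lam
    have hsumcard : ∑ w ∈ s, (W w).card = (∑ w ∈ s, ((W w).erase w).card) + (k - 1) := by
      rw [Finset.sum_congr rfl hcardsum, Finset.sum_add_distrib, Finset.sum_const,
        smul_eq_mul, mul_one, hcs]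
    have hbnd' : ∀ M ∈ matchSet (s.biUnion F), M.card * k ≤ ∑ w ∈ s, (W w).card := by
      intro M hM
      have hSb : EdgeSupp k (s.biUnion F) (s.biUnion W) := by
        intro g hg
        rcases Finset.mem_biUnion.mp hg with ⟨w, hw, hgw⟩
        exact ⟨((hsupp w hw) g hgw).1.trans (Finset.subset_biUnion_of_mem W hw),
          ((hsupp w hw) g hgw).2⟩
      have := matching_card_bound hSb hM
      rwa [hcardbi] at this
    have hbnd'' : ∀ M ∈ matchSet ((s.biUnion F).filter (fun g => Disjoint f g)),
        M.card * k ≤ ∑ w ∈ s, ((W w).erase w).card := by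
      intro M hM
      have hSb : EdgeSupp k ((s.biUnion F).filter (fun g => Disjoint f g))
          (s.biUnion (fun w => (W w).erase w)) := by
        rw [hfilterdisj]
        intro g hg
        rcases Finset.mem_biUnion.mp hg with ⟨w, hw, hgw⟩
        exact ⟨(hphisupp0 w hw g hgw).1.trans
          (Finset.subset_biUnion_of_mem (fun w => (W w).erase w) hw),
          (hphisupp0 w hw g hgw).2⟩
      have := matching_card_bound hSb hM
      rwa [Finset.card_biUnion herasedisj] at this
    have hphi : mPolyC ((f ∪ s.biUnion W).card) k (insert f (s.biUnion F)) lam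
        = lam * (∏ w ∈ s, mPolyC (W w).card k (F w) lam)
          - ∏ w ∈ s, mPolyC ((W w).erase w).card k ((F w).filter (fun g => w ∉ g)) lam := by
      rw [hcardbig]
      rw [mPolyC_insert (n := (∑ w ∈ s, (W w).card) + 1) (n' := ∑ w ∈ s, (W w).card)
        (n'' := ∑ w ∈ s, ((W w).erase w).card) hk0 hfnotin hcard hbnd' hbnd''
        (by omega) (by omega) lam]
      have e1 : (∑ w ∈ s, (W w).card) + 1 - (∑ w ∈ s, (W w).card) = 1 := by omega
      have e2 : (∑ w ∈ s, (W w).card) + 1 - k - (∑ w ∈ s, ((W w).erase w).card) = 0 := by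
        omega
      rw [e1, e2, pow_one, pow_zero, one_mul]
      rw [hphi0, hphi2]
  -- final algebra
    have hQ0 : (∏ w ∈ s, p w) ≠ 0 := by
      rw [Finset.prod_ne_zero_iff]
      intro w hw
      exact hp0 w (Finset.mem_union_left _ (Finset.mem_of_mem_erase hw))
    have hQw : ∀ w ∈ s, (∏ x ∈ f.erase w, p x) * p w = p r * ∏ x ∈ s, p x := by
      intro w hw
      rw [mul_comm, Finset.mul_prod_erase f p (Finset.mem_of_mem_erase hw),
        ← Finset.mul_prod_erase f p hrf]
    have hprodkey : (∏ w ∈ s, mPolyC ((W w).erase w).card k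
          ((F w).filter (fun g => w ∉ g)) lam) * (∏ w ∈ s, ∏ x ∈ f.erase w, p x)
        = (∏ w ∈ s, p w) ^ (k - 1) * ∏ w ∈ s, mPolyC (W w).card k (F w) lam := by
      rw [← Finset.prod_mul_distrib, Finset.prod_congr rfl keyw, Finset.prod_mul_distrib,
        Finset.prod_pow]
    have hQprod : (∏ w ∈ s, ∏ x ∈ f.erase w, p x) * (∏ w ∈ s, p w)
        = (p r * ∏ x ∈ s, p x) ^ (k - 1) := by
      rw [← Finset.prod_mul_distrib, Finset.prod_congr rfl hQw, Finset.prod_const, hcs]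
    -- derive: p r ^(k-1) * ∏ b = (∏ p w) * ∏ a
    have hfin : p r ^ (k - 1) * (∏ w ∈ s, mPolyC ((W w).erase w).card k
          ((F w).filter (fun g => w ∉ g)) lam)
        = (∏ w ∈ s, p w) * ∏ w ∈ s, mPolyC (W w).card k (F w) lam := by
      have hcancel : (∏ w ∈ s, p w) ^ (k - 1) ≠ 0 := pow_ne_zero _ hQ0
      apply mul_right_cancel₀ hcancel
      calc p r ^ (k - 1) * (∏ w ∈ s, mPolyC ((W w).erase w).card k
            ((F w).filter (fun g => w ∉ g)) lam) * (∏ w ∈ s, p w) ^ (k - 1)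
          = (∏ w ∈ s, mPolyC ((W w).erase w).card k
              ((F w).filter (fun g => w ∉ g)) lam) * (p r * ∏ x ∈ s, p x) ^ (k - 1) := by
            rw [mul_pow]; ring
        _ = (∏ w ∈ s, mPolyC ((W w).erase w).card k
              ((F w).filter (fun g => w ∉ g)) lam) * ((∏ w ∈ s, ∏ x ∈ f.erase w, p x)
                * (∏ w ∈ s, p w)) := by rw [hQprod]
        _ = ((∏ w ∈ s, mPolyC ((W w).erase w).card k
              ((F w).filter (fun g => w ∉ g)) lam) * (∏ w ∈ s, ∏ x ∈ f.erase w, p x))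
                * (∏ w ∈ s, p w) := by ring
        _ = ((∏ w ∈ s, p w) ^ (k - 1) * ∏ w ∈ s, mPolyC (W w).card k (F w) lam)
                * (∏ w ∈ s, p w) := by rw [hprodkey]
        _ = (∏ w ∈ s, p w) * (∏ w ∈ s, mPolyC (W w).card k (F w) lam)
                * (∏ w ∈ s, p w) ^ (k - 1) := by ring
    have hSr : ∑ g ∈ (insert f (s.biUnion F)).filter (fun g => r ∈ g),
        ∏ x ∈ g.erase r, p x = ∏ x ∈ s, p x := by
      rw [hFr, Finset.sum_singleton]
    rw [herase, hcardbi, hFnr, hphi0, hSr, hphi]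
    linear_combination hfin


open Classical in
/-- Let `T` be a `k`-uniform hypertree with an edge `e₀` pendant at `u` (the vertex `u`
has degree 1), and for each `v ∈ e₀∖{u}` let `(W v, F v)` be the connected component of
`T∖e₀` containing `v`. If `p` satisfies the eigenvalue system of `T` with `x_u = 1` at
`λ`, all coordinates nonzero, then
`∏_{v ∈ e₀∖{u}} p_v = ∏_{v ∈ e₀∖{u}} φ_{T̃_v − v}(λ)/φ_{T̃_v}(λ)`. -/
theorem stmt16 {α : Type*} [DecidableEq α] (k : ℕ)
    (V : Finset α) (E : Finset (Finset α)) (hT : IsHypertree k V E)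
    (u : α) (hu : u ∈ V) (e0 : Finset α) (he0 : e0 ∈ E) (hue0 : u ∈ e0)
    (hdeg : E.filter (fun f => u ∈ f) = {e0})
    (W : α → Finset α) (F : α → Finset (Finset α))
    (hcomp : ∀ v ∈ e0.erase u,
      IsHypertree k (W v) (F v) ∧ v ∈ W v ∧ F v = (E.erase e0).filter (fun f => f ⊆ W v))
    (hWdisj : ∀ v ∈ e0.erase u, ∀ w ∈ e0.erase u, v ≠ w → Disjoint (W v) (W w))
    (hV : V = (e0.erase u).biUnion W ∪ {u})
    (hE : E = insert e0 ((e0.erase u).biUnion F))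
    (lam : ℂ) (p : α → ℂ) (hpu : p u = 1) (hp0 : ∀ v ∈ V, p v ≠ 0)
    (heig : ∀ v ∈ V.erase u,
      lam * (p v) ^ (k - 1)
        = ∑ f ∈ E.filter (fun f => v ∈ f), ∏ w ∈ f.erase v, p w)
    (hden : ∀ v ∈ e0.erase u, mPolyC (W v).card k (F v) lam ≠ 0) :
    ∏ v ∈ e0.erase u, p v
      = ∏ v ∈ e0.erase u,
          (mPolyC ((W v).erase v).card k ((F v).filter (fun f => v ∉ f)) lam
            / mPolyC (W v).card k (F v) lam) := by
  have hTsupp := hypertree_supp hT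
  have he0card : e0.card = k := (hTsupp e0 he0).2
  have he0V : e0 ⊆ V := (hTsupp e0 he0).1
  rcases Nat.lt_or_ge k 2 with hklt | hk
  · -- degenerate cases k = 0, 1
    interval_cases k
    · exfalso
      have : e0 = ∅ := Finset.card_eq_zero.mp he0card
      rw [this] at hue0
      exact Finset.notMem_empty u hue0
    · have : e0 = {u} := by
        rcases Finset.card_eq_one.mp he0card with ⟨a, ha⟩
        rw [ha] at hue0 ⊢
        rw [Finset.mem_singleton] at hue0
        rw [hue0]
      rw [this, Finset.erase_singleton, Finset.prod_empty, Finset.prod_empty]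
  · -- main case k ≥ 2
    set s := e0.erase u with hsdef
    have hscard : s.card = k - 1 := by
      rw [hsdef, Finset.card_erase_of_mem hue0, he0card]
    have hsV : s ⊆ V := (Finset.erase_subset u e0).trans he0V
    have hP0 : (∏ v ∈ s, p v) ≠ 0 := by
      rw [Finset.prod_ne_zero_iff]
      exact fun v hv => hp0 v (hsV hv)
    -- per-vertex facts
    have hsub : ∀ v ∈ s, W v ⊆ V := by
      intro v hv
      rw [hV]
      exact (Finset.subset_biUnion_of_mem W hv).trans Finset.subset_union_left
    have hFvE : ∀ v ∈ s, F v ⊆ E := by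
      intro v hv
      rw [(hcomp v hv).2.2]
      exact (Finset.filter_subset _ _).trans (Finset.erase_subset e0 E)
    have hsuppv : ∀ v ∈ s, EdgeSupp k (F v) (W v) := fun v hv =>
      hypertree_supp (hcomp v hv).1
    have huW : ∀ v ∈ s, u ∉ W v := by
      intro v hv huWv
      rcases hypertree_cover (hcomp v hv).1 u huWv with h | ⟨g, hg, hug⟩
      · have hvu : v ∈ ({u} : Finset α) := h ▸ (hcomp v hv).2.1
        rw [Finset.mem_singleton] at hvu
        exact (Finset.mem_erase.mp hv).1 hvu
      · have hgE : g ∈ E.erase e0 := by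
          have := (hcomp v hv).2.2 ▸ hg
          exact (Finset.mem_filter.mp this).1
        have : g ∈ E.filter (fun f => u ∈ f) :=
          Finset.mem_filter.mpr ⟨Finset.mem_of_mem_erase hgE, hug⟩
        rw [hdeg, Finset.mem_singleton] at this
        exact (Finset.mem_erase.mp hgE).1 this
    have hWW : ∀ x, ∀ v ∈ s, ∀ v' ∈ s, x ∈ W v → x ∈ W v' → v = v' := by
      intro x v hv v' hv' hx hx'
      by_contra hne
      exact Finset.disjoint_left.mp (hWdisj v hv v' hv' hne) hx hx'
    -- filter identity at interior vertices of W v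
    have hfiltA : ∀ v ∈ s, ∀ w ∈ (W v).erase v,
        E.filter (fun g => w ∈ g) = (F v).filter (fun g => w ∈ g) := by
      intro v hv w hw
      rw [Finset.mem_erase] at hw
      have hwu : w ≠ u := fun h => huW v hv (h ▸ hw.2)
      ext g
      rw [Finset.mem_filter, Finset.mem_filter]
      constructor
      · rintro ⟨hgE, hwg⟩
        rw [hE, Finset.mem_insert] at hgE
        rcases hgE with rfl | hgb
        · exfalso
          have hws : w ∈ s := Finset.mem_erase.mpr ⟨hwu, hwg⟩
          have := hWW w w hws v hv (hcomp w hws).2.1 hw.2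
          exact hw.1 this
        · rcases Finset.mem_biUnion.mp hgb with ⟨x, hx, hgx⟩
          have hwWx : w ∈ W x := (hsuppv x hx g hgx).1 hwg
          have : x = v := hWW w x hx v hv hwWx hw.2
          exact ⟨this ▸ hgx, hwg⟩
      · rintro ⟨hgF, hwg⟩
        exact ⟨hFvE v hv hgF, hwg⟩
    -- filter identity at v itself
    have he0notF : ∀ v ∈ s, e0 ∉ (F v).filter (fun g => v ∈ g) := by
      intro v hv h
      have := hFvE v hv -- not directly
      have h2 : e0 ∈ (E.erase e0).filter (fun f => f ⊆ W v) :=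
        (hcomp v hv).2.2 ▸ (Finset.mem_filter.mp h).1
      exact (Finset.mem_erase.mp (Finset.mem_filter.mp h2).1).1 rfl
    have hfiltB : ∀ v ∈ s,
        E.filter (fun g => v ∈ g) = insert e0 ((F v).filter (fun g => v ∈ g)) := by
      intro v hv
      have hve0 : v ∈ e0 := Finset.mem_of_mem_erase hv
      ext g
      rw [Finset.mem_filter, Finset.mem_insert, Finset.mem_filter]
      constructor
      · rintro ⟨hgE, hvg⟩
        rw [hE, Finset.mem_insert] at hgE
        rcases hgE with rfl | hgb
        · exact Or.inl rfl
        · rcases Finset.mem_biUnion.mp hgb with ⟨x, hx, hgx⟩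
          have hvWx : v ∈ W x := (hsuppv x hx g hgx).1 hvg
          have : x = v := hWW v x hx v hv hvWx (hcomp v hv).2.1
          exact Or.inr ⟨this ▸ hgx, hvg⟩
      · rintro (rfl | ⟨hgF, hvg⟩)
        · exact ⟨he0, hve0⟩
        · exact ⟨hFvE v hv hgF, hvg⟩
    -- the per-component key identity
    have hkeyP : ∀ v ∈ s,
        mPolyC ((W v).erase v).card k ((F v).filter (fun g => v ∉ g)) lam
          * (∏ x ∈ s, p x)
        = p v ^ k * mPolyC (W v).card k (F v) lam := by
      intro v hv
      have hvne : v ≠ u := (Finset.mem_erase.mp hv).1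
      have hve0 : v ∈ e0 := Finset.mem_of_mem_erase hv
      have RTv : RTree k v (W v) (F v) := hypertree_rtree (hcomp v hv).1 v (hcomp v hv).2.1
      have hp0v : ∀ x ∈ W v, p x ≠ 0 := fun x hx => hp0 x (hsub v hv hx)
      have heigv : ∀ w ∈ (W v).erase v,
          lam * p w ^ (k - 1) = ∑ g ∈ (F v).filter (fun g => w ∈ g), ∏ x ∈ g.erase w, p x := by
        intro w hw
        have hwWv : w ∈ W v := Finset.mem_of_mem_erase hw
        have hwu : w ≠ u := fun h => huW v hv (h ▸ hwWv)
        have hwV : w ∈ V.erase u := Finset.mem_erase.mpr ⟨hwu, hsub v hv hwWv⟩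
        rw [heig w hwV, hfiltA v hv w hw]
      have keyv := key_lemma hk lam p RTv hp0v heigv
      -- eigen equation at v
      have heigv0 : lam * p v ^ (k - 1)
          = (∏ x ∈ e0.erase v, p x)
            + ∑ g ∈ (F v).filter (fun g => v ∈ g), ∏ x ∈ g.erase v, p x := by
        have hvV : v ∈ V.erase u := Finset.mem_erase.mpr ⟨hvne, hsV hv⟩
        rw [heig v hvV, hfiltB v hv, Finset.sum_insert (he0notF v hv)]
      have hQv : (∏ x ∈ e0.erase v, p x) * p v = ∏ x ∈ s, p x := by
        rw [mul_comm, Finset.mul_prod_erase e0 p hve0, ← Finset.mul_prod_erase e0 p hue0,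
          hpu, one_mul]
      rw [← sub_eq_iff_eq_add] at heigv0
      rw [heigv0] at keyv
      -- keyv : φ₀v * Qv = p v ^ (k-1) * φv ; multiply by p v
      have := congrArg (fun t => t * p v) keyv
      rw [mul_assoc, hQv, mul_assoc] at this
      rw [this]
      have hpk : p v ^ (k - 1) * p v = p v ^ k := by
        rw [← pow_succ]
        congr 1
        omega
      rw [← mul_assoc, mul_comm (p v ^ (k - 1)), mul_assoc, hpk]
      ring
    -- take products over v ∈ s
    have hprod : (∏ v ∈ s, mPolyC ((W v).erase v).card k
          ((F v).filter (fun g => v ∉ g)) lam) * (∏ x ∈ s, p x) ^ s.card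
        = (∏ x ∈ s, p x) ^ k
          * ∏ v ∈ s, mPolyC (W v).card k (F v) lam := by
      rw [← Finset.prod_const, ← Finset.prod_mul_distrib,
        Finset.prod_congr rfl hkeyP, Finset.prod_mul_distrib, Finset.prod_pow]
    have hfinal : (∏ v ∈ s, mPolyC ((W v).erase v).card k
          ((F v).filter (fun g => v ∉ g)) lam)
        = (∏ x ∈ s, p x) * ∏ v ∈ s, mPolyC (W v).card k (F v) lam := by
      have hc : ((∏ x ∈ s, p x) ^ (k - 1)) ≠ 0 := pow_ne_zero _ hP0
      apply mul_right_cancel₀ hc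
      rw [hscard] at hprod
      rw [hprod]
      have : (∏ x ∈ s, p x) ^ k = (∏ x ∈ s, p x) * (∏ x ∈ s, p x) ^ (k - 1) := by
        rw [← pow_succ']
        congr 1
        omega
      rw [this]
      ring
    have hdenom : (∏ v ∈ s, mPolyC (W v).card k (F v) lam) ≠ 0 := by
      rw [Finset.prod_ne_zero_iff]
      exact hden
    rw [Finset.prod_div_distrib, eq_div_iff hdenom]
    exact hfinal.symm
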